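/- arXiv:1905.06180 — 5 statements merged into one kernel-verified Lean document; each statement's English description precedes it below -/
import Mathlib

section
/- Let D be a balanced set of 2k positive integers. Then there exists a 2k-cycle C with integer vertices such that the multiset of differences ΔC equals ±D, and all vertices of C lie in the interval [−d, d′], where d = max D and d′ = max(D∖{d}). -/
/-!
Enumerate `D` as `e 0 < e 1 < ⋯ < e (2k-1)`, so `d = e (2k-1)` and `d' = e (2k-2)`, and let
`S j = ∑_{t<j} (-1)^t e t` be the alternating partial sums. Consecutive sums differ by `± e j`,
and since `e` is positive and increasing, the even sums `S 0 > S 2 > ⋯` are `≤ 0` while the odd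
sums `S 1 < S 3 < ⋯` are `≥ e 0 > 0`; in particular `S` is injective.

With `τ` the split point of the balanced pattern, the cycle walks `S 0, …, S (2τ)` shifted so
that it ends at `-d`, steps up by `d` to `0`, walks `S (2k-2), …, S (2τ)` backwards shifted so
that it starts at `0`, and steps back to its start. Balancedness says `S (2k) = 2 S (2τ)`, which
is exactly what makes the last step have length `d'`. The first stretch lies in `[-d, 0)` and
the second in `[0, d']`, so all vertices are distinct and lie in `[-d, d']`.
-/

/-- The `i`-th entry (0-indexed) of the alternating difference pattern of a finite
set `D` of integers: `s i = d_{2i+2} − d_{2i+1}` where `d₁ < d₂ < …` are the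
elements of `D` in increasing order. -/
def adp (D : Finset ℤ) (i : ℕ) : ℤ :=
  (D.sort (· ≤ ·)).getD (2 * i + 1) 0 - (D.sort (· ≤ ·)).getD (2 * i) 0

/-- A set `D` of `2k` positive integers is balanced if for some `τ ∈ [1,k]`
the first `τ` entries of the alternating difference pattern sum to the same
value as the remaining `k − τ` entries. -/
def IsBalancedSet (k : ℕ) (D : Finset ℤ) : Prop :=
  ∃ τ, 1 ≤ τ ∧ τ ≤ k ∧
    ∑ i ∈ Finset.range τ, adp D i = ∑ i ∈ Finset.Ico τ k, adp D i

open Set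

section AltSum

open Finset

variable {R : Type*} [CommRing R] {e : ℕ → R}

def altSum (e : ℕ → R) (n : ℕ) : R := ∑ t ∈ range n, (-1) ^ t * e t

@[simp] lemma altSum_zero : altSum e 0 = 0 := sum_range_zero _

lemma altSum_succ (n : ℕ) : altSum e (n + 1) = altSum e n + (-1) ^ n * e n :=
  sum_range_succ _ _

lemma altSum_two_mul_add_one (i : ℕ) :
    altSum e (2 * i + 1) = altSum e (2 * i) + e (2 * i) := by
  simp [altSum_succ]

lemma altSum_two_mul_add_two (i : ℕ) :
    altSum e (2 * i + 2) = altSum e (2 * i + 1) - e (2 * i + 1) := by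
  simp [altSum_succ, pow_succ, sub_eq_add_neg]

lemma altSum_two_mul (t : ℕ) :
    altSum e (2 * t) = -∑ i ∈ range t, (e (2 * i + 1) - e (2 * i)) := by
  induction t with
  | zero => simp
  | succ t ih =>
    rw [sum_range_succ, mul_add_one, altSum_two_mul_add_two, altSum_two_mul_add_one, ih]
    ring

variable [LinearOrder R] [IsStrictOrderedRing R]

lemma abs_altSum_succ_sub (n : ℕ) : |altSum e (n + 1) - altSum e n| = |e n| := by
  simp [altSum_succ, abs_mul]

lemma strictAnti_altSum_two_mul (he : StrictMono e) : StrictAnti fun i => altSum e (2 * i) :=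
  strictAnti_nat_of_succ_lt fun i => by
    rw [mul_add_one, altSum_two_mul_add_two, altSum_two_mul_add_one]
    linarith [he (Nat.lt_succ_self (2 * i))]

lemma strictMono_altSum_two_mul_add_one (he : StrictMono e) :
    StrictMono fun i => altSum e (2 * i + 1) :=
  strictMono_nat_of_lt_succ fun i => by
    rw [altSum_two_mul_add_one (i + 1), mul_add_one, altSum_two_mul_add_two]
    linarith [he (Nat.lt_succ_self (2 * i + 1))]

lemma altSum_two_mul_lt_altSum_two_mul_add_one (he : StrictMono e) (he0 : 0 < e 0) (i j : ℕ) :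
    altSum e (2 * i) < altSum e (2 * j + 1) := by
  have h0 : altSum e (2 * i) ≤ altSum e (2 * 0) :=
    (strictAnti_altSum_two_mul he).antitone (Nat.zero_le i)
  have h1 : altSum e (2 * 0 + 1) ≤ altSum e (2 * j + 1) :=
    (strictMono_altSum_two_mul_add_one he).monotone (Nat.zero_le j)
  rw [mul_zero, altSum_zero] at h0
  rw [altSum_two_mul_add_one, mul_zero, altSum_zero] at h1
  linarith

lemma altSum_injective (he : StrictMono e) (he0 : 0 < e 0) : Function.Injective (altSum e) := by
  intro a b hab
  obtain ⟨i, rfl | rfl⟩ := Nat.even_or_odd' a <;>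
    obtain ⟨j, rfl | rfl⟩ := Nat.even_or_odd' b
  · rw [(strictAnti_altSum_two_mul he).injective hab]
  · exact absurd hab (altSum_two_mul_lt_altSum_two_mul_add_one he he0 i j).ne
  · exact absurd hab.symm (altSum_two_mul_lt_altSum_two_mul_add_one he he0 j i).ne
  · rw [(strictMono_altSum_two_mul_add_one he).injective hab]

lemma altSum_two_mul_le (he : StrictMono e) (he0 : 0 < e 0) {h i : ℕ} (hh : h ≤ 2 * i) :
    altSum e (2 * i) ≤ altSum e h := by
  obtain ⟨j, rfl | rfl⟩ := Nat.even_or_odd' h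
  · exact (strictAnti_altSum_two_mul he).antitone (by omega)
  · exact (altSum_two_mul_lt_altSum_two_mul_add_one he he0 i j).le

lemma altSum_le_two_mul_add_one (he : StrictMono e) (he0 : 0 < e 0) {h i : ℕ}
    (hh : h ≤ 2 * i + 1) : altSum e h ≤ altSum e (2 * i + 1) := by
  obtain ⟨j, rfl | rfl⟩ := Nat.even_or_odd' h
  · exact (altSum_two_mul_lt_altSum_two_mul_add_one he he0 j i).le
  · exact (strictMono_altSum_two_mul_add_one he).monotone (by omega)

lemma altSum_sub_altSum_two_mul_add_two_le (he : StrictMono e) (he0 : 0 < e 0) {h i : ℕ}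
    (hh : h ≤ 2 * i + 2) : altSum e h - altSum e (2 * i + 2) ≤ e (2 * i + 1) := by
  rcases hh.lt_or_eq with hh | rfl
  · linarith [altSum_le_two_mul_add_one he he0 (Nat.le_of_lt_succ hh),
      altSum_two_mul_add_two (e := e) i]
  · linarith [he0.trans (he (Nat.zero_lt_succ (2 * i)))]

end AltSum

section ZigzagCycle

def zigzagStepIndex (k τ h : ℕ) : ℕ :=
  if h < 2 * τ then h
  else if h = 2 * τ then 2 * k - 1
  else if h < 2 * k - 1 then 2 * k + 2 * τ - 2 - h
  else 2 * k - 2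

lemma zigzagStepIndex_bijOn {k τ : ℕ} (hτk : τ < k) :
    BijOn (zigzagStepIndex k τ) (Iio (2 * k)) (Iio (2 * k)) := by
  have hmaps : MapsTo (zigzagStepIndex k τ) (Iio (2 * k)) (Iio (2 * k)) := by
    intro h hh
    simp only [mem_Iio, zigzagStepIndex] at hh ⊢
    split_ifs <;> omega
  refine ((finite_Iio _).injOn_iff_bijOn_of_mapsTo hmaps).mp fun a ha b hb hab => ?_
  simp only [mem_Iio, zigzagStepIndex] at ha hb hab
  split_ifs at hab <;> omega

variable {R : Type*} [CommRing R] (e : ℕ → R) (k τ : ℕ)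

def zigzagCycle (h : ℕ) : R :=
  if h ≤ 2 * τ then altSum e h - altSum e (2 * τ) - e (2 * k - 1)
  else altSum e (2 * k + 2 * τ - 1 - h) - altSum e (2 * k - 2)

variable {e k τ}

lemma zigzagCycle_of_le {h : ℕ} (hh : h ≤ 2 * τ) :
    zigzagCycle e k τ h = altSum e h - altSum e (2 * τ) - e (2 * k - 1) :=
  if_pos hh

lemma zigzagCycle_of_lt {h : ℕ} (hh : 2 * τ < h) :
    zigzagCycle e k τ h = altSum e (2 * k + 2 * τ - 1 - h) - altSum e (2 * k - 2) :=
  if_neg hh.not_ge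

variable [LinearOrder R] [IsStrictOrderedRing R]

lemma zigzagCycle_mem_Ico_of_le (he : StrictMono e) (he0 : 0 < e 0) (hτ : 0 < τ) (hτk : τ < k)
    {h : ℕ} (hh : h ≤ 2 * τ) : zigzagCycle e k τ h ∈ Ico (-e (2 * k - 1)) 0 := by
  obtain ⟨i, rfl⟩ : ∃ i, τ = i + 1 := ⟨τ - 1, by omega⟩
  have hlow := altSum_two_mul_le he he0 hh
  have hup := altSum_sub_altSum_two_mul_add_two_le he he0 (hh.trans_eq (mul_add_one 2 i))
  have hlast := he (show 2 * i + 1 < 2 * k - 1 by omega)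
  rw [zigzagCycle_of_le hh, mul_add_one] at *
  constructor <;> linarith

lemma zigzagCycle_mem_Icc_of_lt (he : StrictMono e) (he0 : 0 < e 0) (hτ : 0 < τ) {h : ℕ}
    (hh : 2 * τ < h) (hhk : h < 2 * k) : zigzagCycle e k τ h ∈ Icc 0 (e (2 * k - 2)) := by
  obtain ⟨i, rfl⟩ : ∃ i, k = i + 2 := ⟨k - 2, by omega⟩
  rw [zigzagCycle_of_lt hh, show 2 * (i + 2) - 2 = 2 * i + 2 by omega]
  have hj : 2 * (i + 2) + 2 * τ - 1 - h ≤ 2 * i + 2 := by omega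
  have hlow := altSum_two_mul_le he he0 (show _ ≤ 2 * (i + 1) from hj)
  have hup := altSum_sub_altSum_two_mul_add_two_le he he0 hj
  have hlast := he (show 2 * i + 1 < 2 * i + 2 by omega)
  rw [mul_add_one] at hlow
  constructor <;> linarith

lemma zigzagCycle_mem_Icc (he : StrictMono e) (he0 : 0 < e 0) (hτ : 0 < τ) (hτk : τ < k)
    {h : ℕ} (hh : h < 2 * k) :
    zigzagCycle e k τ h ∈ Icc (-e (2 * k - 1)) (e (2 * k - 2)) := by
  have hpos : ∀ n, 0 < e n := fun n => he0.trans_le (he.monotone n.zero_le)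
  rcases le_or_gt h (2 * τ) with hτh | hτh
  · have := zigzagCycle_mem_Ico_of_le he he0 hτ hτk hτh
    exact ⟨this.1, this.2.le.trans (hpos _).le⟩
  · have := zigzagCycle_mem_Icc_of_lt he he0 hτ hτh hh
    exact ⟨(neg_nonpos.2 (hpos _).le).trans this.1, this.2⟩

lemma zigzagCycle_injOn (he : StrictMono e) (he0 : 0 < e 0) (hτ : 0 < τ) (hτk : τ < k) :
    InjOn (zigzagCycle e k τ) (Iio (2 * k)) := by
  intro a ha b hb hab
  rw [mem_Iio] at ha hb
  rcases le_or_gt a (2 * τ) with haτ | haτ <;> rcases le_or_gt b (2 * τ) with hbτ | hbτ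
  · rw [zigzagCycle_of_le haτ, zigzagCycle_of_le hbτ] at hab
    exact altSum_injective he he0 (by linarith)
  · linarith [(zigzagCycle_mem_Ico_of_le he he0 hτ hτk haτ).2,
      (zigzagCycle_mem_Icc_of_lt he he0 hτ hbτ hb).1]
  · linarith [(zigzagCycle_mem_Ico_of_le he he0 hτ hτk hbτ).2,
      (zigzagCycle_mem_Icc_of_lt he he0 hτ haτ ha).1]
  · rw [zigzagCycle_of_lt haτ, zigzagCycle_of_lt hbτ] at hab
    have := altSum_injective he he0 (sub_left_injective hab)
    omega

lemma abs_zigzagCycle_succ_sub (he : StrictMono e) (he0 : 0 < e 0) (hτk : τ < k)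
    (hbal : altSum e (2 * k) = 2 * altSum e (2 * τ)) {h : ℕ} (hh : h < 2 * k) :
    |zigzagCycle e k τ ((h + 1) % (2 * k)) - zigzagCycle e k τ h| =
      e (zigzagStepIndex k τ h) := by
  have hpos : ∀ n, 0 < e n := fun n => he0.trans_le (he.monotone n.zero_le)
  rcases lt_trichotomy h (2 * τ) with hτh | rfl | hτh
  · rw [Nat.mod_eq_of_lt (by omega), zigzagCycle_of_le hτh, zigzagCycle_of_le hτh.le,
      zigzagStepIndex, if_pos hτh, sub_sub_sub_cancel_right, sub_sub_sub_cancel_right,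
      abs_altSum_succ_sub, abs_of_pos (hpos h)]
  · rw [Nat.mod_eq_of_lt (by omega), zigzagCycle_of_lt (Nat.lt_succ_self _),
      zigzagCycle_of_le le_rfl, zigzagStepIndex, if_neg (lt_irrefl _), if_pos rfl,
      show 2 * k + 2 * τ - 1 - (2 * τ + 1) = 2 * k - 2 by omega]
    simpa using (hpos (2 * k - 1)).le
  rcases (show h + 1 < 2 * k ∨ h + 1 = 2 * k by omega) with hlast | hlast
  · rw [Nat.mod_eq_of_lt hlast, zigzagCycle_of_lt hτh, zigzagCycle_of_lt (by omega),
      zigzagStepIndex, if_neg (by omega), if_neg (by omega), if_pos (by omega),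
      show 2 * k + 2 * τ - 1 - h = (2 * k + 2 * τ - 2 - h) + 1 by omega,
      show 2 * k + 2 * τ - 1 - (h + 1) = 2 * k + 2 * τ - 2 - h by omega,
      sub_sub_sub_cancel_right, abs_sub_comm, abs_altSum_succ_sub, abs_of_pos (hpos _)]
  · -- the closing step, whose length `e (2k-2)` is forced by balancedness
    obtain ⟨i, rfl⟩ : ∃ i, k = i + 1 := ⟨k - 1, by omega⟩
    rw [hlast, Nat.mod_self, zigzagCycle_of_le (Nat.zero_le _), zigzagCycle_of_lt hτh,
      zigzagStepIndex, if_neg (by omega), if_neg (by omega), if_neg (by omega),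
      show 2 * (i + 1) + 2 * τ - 1 - h = 2 * τ by omega,
      show 2 * (i + 1) - 2 = 2 * i by omega, show 2 * (i + 1) - 1 = 2 * i + 1 by omega]
    rw [mul_add_one, altSum_two_mul_add_two, altSum_two_mul_add_one] at hbal
    rw [altSum_zero, show |_| = |-e (2 * i)| by congr 1; linarith, abs_neg, abs_of_pos (hpos _)]

end ZigzagCycle

lemma ZMod.val_add_one_eq {n : ℕ} [NeZero n] (z : ZMod n) : (z + 1).val = (z.val + 1) % n := by
  rw [← ZMod.val_natCast, Nat.cast_succ, ZMod.natCast_zmod_val]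

lemma ZMod.bijOn_val (n : ℕ) [NeZero n] : BijOn (ZMod.val : ZMod n → ℕ) univ (Iio n) :=
  ⟨fun z _ => z.val_lt, (ZMod.val_injective n).injOn,
    fun m hm => ⟨m, trivial, ZMod.val_cast_of_lt hm⟩⟩

lemma Multiset.bind_pair_neg_eq_of_bijOn {ι α : Type*} [Fintype ι] [AddCommGroup α]
    [LinearOrder α] [IsOrderedAddMonoid α] (g : ι → α) (D : Finset α)
    (hg : BijOn (fun i => |g i|) univ D) :
    ((Finset.univ.val : Multiset ι).bind fun i => {g i, -g i}) =
      D.val + D.val.map (fun x => -x) := by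
  have hpair : ∀ x : α, ({x, -x} : Multiset α) = {|x|, -|x|} := by
    intro x
    rcases abs_choice x with h | h <;> rw [h]
    rw [neg_neg, Multiset.pair_comm]
  have hD : (Finset.univ.val : Multiset ι).map (fun i => |g i|) = D.val := by
    rw [← Finset.image_val_of_injOn (by simpa using hg.injOn)]
    congr
    exact_mod_cast Finset.coe_univ (α := ι) ▸ hg.image_eq
  rw [Multiset.bind_congr fun i _ => hpair (g i)]
  simp only [Multiset.insert_eq_cons, Multiset.bind_cons, Multiset.bind_singleton, ← hD,
    Multiset.map_map]
  rfl

lemma Finset.exists_strictMono_bijOn_getD_sort (D : Finset ℤ) :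
    ∃ e : ℕ → ℤ, StrictMono e ∧ BijOn e (Set.Iio D.card) D ∧
      ∀ i < D.card, e i = (D.sort (· ≤ ·)).getD i 0 := by
  set l := D.sort (· ≤ ·)
  have hlen : l.length = D.card := D.length_sort _
  have hl : ∀ i j, i < j → j < D.card → l.getD i 0 < l.getD j 0 := by
    intro i j hij hj
    rw [List.getD_eq_getElem _ _ (by omega), List.getD_eq_getElem _ _ (by omega)]
    exact D.sortedLT_sort (show (⟨i, by omega⟩ : Fin l.length) < ⟨j, by omega⟩ from hij)
  set e : ℕ → ℤ := fun i =>
    if i < D.card then l.getD i 0 else l.getD (D.card - 1) 0 + (i + 1 - D.card : ℕ)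
  have he : StrictMono e := strictMono_nat_of_lt_succ fun i => by
    simp only [e]
    split_ifs with h₁ h₂ h₂
    · exact hl _ _ (Nat.lt_succ_self i) h₂
    · rw [show i = D.card - 1 by omega]; omega
    · omega
    · omega
  refine ⟨e, he, ⟨fun i hi => ?_, he.injective.injOn, fun x hx => ?_⟩,
    fun i hi => if_pos hi⟩
  · simp only [e, if_pos (show i < D.card from hi)]
    rw [List.getD_eq_getElem _ _ (by rw [hlen]; exact hi)]
    exact (D.mem_sort _).1 (List.getElem_mem _)
  · obtain ⟨i, hi, rfl⟩ := List.mem_iff_getElem.1 ((D.mem_sort (· ≤ ·)).2 hx)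
    rw [D.length_sort] at hi
    refine ⟨i, show i < D.card by omega, ?_⟩
    simp only [e, if_pos (show i < D.card by omega)]
    exact List.getD_eq_getElem _ _ _

lemma IsBalancedSet.exists_altSum_eq {k : ℕ} {D : Finset ℤ} (hD : IsBalancedSet k D)
    {e : ℕ → ℤ} (he : StrictMono e)
    (hsort : ∀ i < 2 * k, e i = (D.sort (· ≤ ·)).getD i 0) :
    ∃ τ, 0 < τ ∧ τ < k ∧ altSum e (2 * k) = 2 * altSum e (2 * τ) := by
  obtain ⟨τ, hτ, hτk, hbal⟩ := hD
  have hadp : ∀ i < k, adp D i = e (2 * i + 1) - e (2 * i) := fun i hi => by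
    rw [adp, hsort _ (by omega), hsort _ (by omega)]
  rw [Finset.sum_congr rfl fun i hi => hadp i (by simp at hi; omega),
    Finset.sum_congr rfl fun i hi => hadp i (by simp at hi; omega)] at hbal
  have hsum : altSum e (2 * k) = 2 * altSum e (2 * τ) := by
    rw [altSum_two_mul, altSum_two_mul, ← Finset.sum_range_add_sum_Ico _ hτk, ← hbal]
    ring
  refine ⟨τ, hτ, hτk.lt_of_ne fun hτk => ?_, hsum⟩
  subst hτk
  have hneg := strictAnti_altSum_two_mul he hτ
  simp only [mul_zero, altSum_zero] at hneg
  linarith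

theorem stmt3_general (k : ℕ) [NeZero (2 * k)] (D : Finset ℤ)
    (hcard : D.card = 2 * k) (hpos : ∀ x ∈ D, 0 < x) (hbal : IsBalancedSet k D)
    (d d' : ℤ) (hd : d ∈ D ∧ ∀ x ∈ D, x ≤ d)
    (hd' : d' ∈ D.erase d ∧ ∀ x ∈ D.erase d, x ≤ d') :
    ∃ C : ZMod (2 * k) → ℤ, Function.Injective C ∧
      ((Finset.univ.val : Multiset (ZMod (2 * k))).bind fun h =>
          {C (h + 1) - C h, -(C (h + 1) - C h)})
        = D.val + D.val.map (fun x => -x) ∧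
      ∀ h, C h ∈ Set.Icc (-d) d' := by
  obtain ⟨e, he, hbij, hsort⟩ := D.exists_strictMono_bijOn_getD_sort
  rw [hcard] at hbij hsort
  have he0 : 0 < e 0 := hpos _ (hbij.mapsTo (Nat.pos_of_neZero (2 * k)))
  obtain ⟨τ, hτ, hτk, hsum⟩ := hbal.exists_altSum_eq he hsort
  have hd_eq : d = e (2 * k - 1) :=
    IsGreatest.unique ⟨hd.1, fun x hx => hd.2 x hx⟩ (hbij.image_eq ▸
      he.monotone.map_isGreatest ⟨by simp; omega, fun j hj => by simp at hj; omega⟩)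
  subst hd_eq
  have hd'_eq : d' = e (2 * k - 2) := by
    refine IsGreatest.unique (s := (D : Set ℤ) \ {e (2 * k - 1)}) ?_ ?_
    · rw [← Finset.coe_erase]
      exact ⟨hd'.1, fun x hx => hd'.2 x hx⟩
    · rw [← (hbij.sdiff_singleton (show 2 * k - 1 < 2 * k by omega)).image_eq]
      exact he.monotone.map_isGreatest ⟨by simp; omega, fun j hj => by simp at hj; omega⟩
  subst hd'_eq
  refine ⟨fun z => zigzagCycle e k τ z.val,
    fun a b hab => ZMod.val_injective _ (zigzagCycle_injOn he he0 hτ hτk a.val_lt b.val_lt hab),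
    Multiset.bind_pair_neg_eq_of_bijOn _ D ?_,
    fun z => zigzagCycle_mem_Icc he he0 hτ hτk z.val_lt⟩
  refine ((hbij.comp (zigzagStepIndex_bijOn hτk)).comp (ZMod.bijOn_val _)).congr fun z _ => ?_
  simp only [Function.comp, ZMod.val_add_one_eq, abs_zigzagCycle_succ_sub he he0 hτk hsum z.val_lt]

/-- If `D` is a balanced set of `2k` positive integers, then there is a `2k`-cycle
`C` with integer vertices such that `ΔC = ±D` (as multisets) and all vertices of
`C` lie in `[−d, d′]` where `d = max D` and `d′ = max (D ∖ {d})`. -/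
theorem stmt3 (k : ℕ) (hk : 0 < k) [NeZero (2 * k)] (D : Finset ℤ)
    (hcard : D.card = 2 * k) (hpos : ∀ x ∈ D, 0 < x) (hbal : IsBalancedSet k D)
    (d d' : ℤ) (hd : d ∈ D ∧ ∀ x ∈ D, x ≤ d)
    (hd' : d' ∈ D.erase d ∧ ∀ x ∈ D.erase d, x ≤ d') :
    ∃ C : ZMod (2 * k) → ℤ, Function.Injective C ∧
      ((Finset.univ.val : Multiset (ZMod (2 * k))).bind fun h =>
          {C (h + 1) - C h, -(C (h + 1) - C h)})
        = D.val + D.val.map (fun x => -x) ∧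
      ∀ h, C h ∈ Set.Icc (-d) d' :=
  stmt3_general k D hcard hpos hbal d d' hd hd'
end

section
/- Let D = {d, d*} ∪ X be a set of 2λ positive integers with d < d*, such that X (of size 2λ−2) can be partitioned into pairs of consecutive integers. Then there exists a path P = 0, p₁, p₂, …, p_{2λ} of length 2λ with integer vertices such that: (i) (p₁, p₂) = (−d, d*−d) and pᵢ ∈ [d*−d+1, d*−d+max X] for all i > 2; (ii) p_{2λ} = d*−d+λ−1; (iii) the multiset of differences of P equals ±D. -/
/-- A finite set of integers can be partitioned into pairs of consecutive integers. -/
def PairsOfConsecutive (X : Finset ℤ) : Prop :=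
  ∃ S : Finset ℤ, Disjoint S (S.image (· + 1)) ∧ S ∪ S.image (· + 1) = X

/-!
List the lower ends of the pairs of `X` decreasingly as `y 0 > y 1 > ⋯ > y (m - 1)`, where
`λ = m + 1`; disjointness of the pairs makes consecutive ones differ by at least `2`. After
`0, -d, b` with `b = d* - d`, the path alternately climbs by `y k + 1` and descends by `y k`,
visiting `b + k + y k + 1` and then `b + k + 1`. The low vertices fill `[b + 1, b + m]`, while
`k + y k` decreases strictly from `y 0 = max X - 1` and stays `≥ m`, so the high vertices are
distinct and lie in `(b + m, b + max X]`. The steps have lengths `d`, `d*` and both elements of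
every pair, i.e. exactly the elements of `D`.
-/

open Finset

lemma Multiset.bind_pair_neg {ι α : Type*} [AddCommGroup α] [LinearOrder α]
    [IsOrderedAddMonoid α] (s : Multiset ι) (f : ι → α) :
    (s.bind fun i => {f i, -f i}) = s.map (|f ·|) + (s.map (|f ·|)).map (-·) := by
  have hpair : ∀ a : α, ({a, -a} : Multiset α) = {|a|, -|a|} := by
    intro a
    rcases abs_cases a with ⟨h, -⟩ | ⟨h, -⟩
    · rw [h]
    · rw [h, neg_neg, Multiset.pair_comm]
  induction s using Multiset.induction_on with
  | empty => simp
  | cons i s ih =>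
    rw [Multiset.cons_bind, ih, hpair]
    simp only [Multiset.map_cons, Multiset.insert_eq_cons, Multiset.cons_add,
      Multiset.add_cons, Multiset.singleton_add]
    exact Multiset.cons_swap _ _ _

lemma Finset.univ_val_map_eq_of_forall_exists {ι α : Type*} [Fintype ι] [DecidableEq α]
    {g : ι → α} {D : Finset α} (hcard : #D = Fintype.card ι) (hD : ∀ x ∈ D, ∃ i, g i = x) :
    univ.val.map g = D.val := by
  have hsub : D ⊆ univ.image g := fun x hx => by simpa using hD x hx
  have himage : univ.image g = D :=
    (eq_of_subset_of_card_le hsub (card_image_le.trans (by simp [hcard]))).symm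
  have hinj : Set.InjOn g (univ : Finset ι) :=
    card_image_iff.mp (by rw [himage, hcard, card_univ])
  rw [← himage, image_val_of_injOn hinj]

lemma Finset.exists_enum_of_disjoint_image_add_one (S : Finset ℤ)
    (hS : Disjoint S (S.image (· + 1))) :
    ∃ y : ℕ → ℤ, (∀ k < #S, y k ∈ S) ∧ (∀ s ∈ S, ∃ k < #S, y k = s) ∧
      ∀ k, k + 1 < #S → y (k + 1) + 2 ≤ y k := by
  let e := S.orderEmbOfFin rfl
  refine ⟨fun k => if h : k < #S then e (Fin.rev ⟨k, h⟩) else 0, ?_, ?_, ?_⟩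
  · intro k hk
    simp [hk, e]
  · intro s hs
    obtain ⟨i, rfl⟩ : s ∈ Set.range e := by simpa [e] using hs
    exact ⟨i.rev, i.rev.isLt, by simp only [i.rev.isLt, dite_true, Fin.eta, Fin.rev_rev]⟩
  · intro k hk
    have hlt : e (Fin.rev ⟨k + 1, hk⟩) < e (Fin.rev ⟨k, by omega⟩) :=
      e.strictMono (Fin.rev_lt_rev.mpr (Fin.mk_lt_mk.mpr k.lt_succ_self))
    have hne : e (Fin.rev ⟨k + 1, hk⟩) + 1 ≠ e (Fin.rev ⟨k, by omega⟩) := fun h =>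
      disjoint_left.mp hS (S.orderEmbOfFin_mem rfl _)
        (mem_image.mpr ⟨_, S.orderEmbOfFin_mem rfl _, h⟩)
    dsimp only
    rw [dif_pos hk, dif_pos (by omega)]
    omega

lemma Nat.zero_or_one_or_even_or_odd_add_two (n : ℕ) :
    n = 0 ∨ n = 1 ∨ (∃ k, n = 2 * k + 2) ∨ ∃ k, n = 2 * k + 3 := by
  obtain ⟨k, rfl | rfl⟩ := n.even_or_odd'
  · cases k <;> grind
  · cases k <;> grind

def zigzag (d b : ℤ) (y : ℕ → ℤ) : ℕ → ℤ
  | 0 => 0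
  | 1 => -d
  | n + 2 => b + (n / 2 : ℕ) + if n % 2 = 1 then y (n / 2) + 1 else 0

section zigzag

variable {d b : ℤ} {y : ℕ → ℤ} {m : ℕ}

@[simp] lemma zigzag_zero : zigzag d b y 0 = 0 := rfl

@[simp] lemma zigzag_one : zigzag d b y 1 = -d := rfl

@[simp] lemma zigzag_two : zigzag d b y 2 = b := by simp [zigzag]

@[simp] lemma zigzag_two_mul_add_two (k : ℕ) : zigzag d b y (2 * k + 2) = b + k := by
  simp [zigzag]

@[simp] lemma zigzag_two_mul_add_three (k : ℕ) :
    zigzag d b y (2 * k + 3) = b + k + (y k + 1) := by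
  have h : (2 * k + 1) / 2 = k := by omega
  simp [zigzag, h]

lemma add_two_mul_sub_le (hgap : ∀ k, k + 1 < m → y (k + 1) + 2 ≤ y k) {j k : ℕ}
    (hjk : j ≤ k) (hk : k < m) : y k + 2 * ((k : ℤ) - j) ≤ y j := by
  induction k, hjk using Nat.le_induction with
  | base => simp
  | succ k hjk ih =>
    have := hgap k hk
    have := ih (by omega)
    push_cast
    omega

lemma le_add_of_gap (hgap : ∀ k, k + 1 < m → y (k + 1) + 2 ≤ y k)
    (hpos : ∀ k < m, 0 < y k) {k : ℕ} (hk : k < m) : (m : ℤ) ≤ k + y k := by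
  have := add_two_mul_sub_le hgap (k := m - 1) (by omega : k ≤ m - 1) (by omega)
  have := hpos (m - 1) (by omega)
  omega

lemma add_lt_add_of_gap (hgap : ∀ k, k + 1 < m → y (k + 1) + 2 ≤ y k) {j k : ℕ}
    (hjk : j < k) (hk : k < m) : (k : ℤ) + y k < j + y j := by
  have := add_two_mul_sub_le hgap hjk.le hk
  omega

lemma zigzag_ne_of_lt (hd : 0 < d) (hb : 0 < b) (hhigh : ∀ k < m, (m : ℤ) ≤ k + y k)
    (hanti : ∀ j k, j < k → k < m → (k : ℤ) + y k < j + y j) {n₁ n₂ : ℕ} (hlt : n₁ < n₂)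
    (hn₂ : n₂ ≤ 2 * m + 2) : zigzag d b y n₁ ≠ zigzag d b y n₂ := by
  rcases n₁.zero_or_one_or_even_or_odd_add_two with rfl | rfl | ⟨j, rfl⟩ | ⟨j, rfl⟩ <;>
  rcases n₂.zero_or_one_or_even_or_odd_add_two with rfl | rfl | ⟨k, rfl⟩ | ⟨k, rfl⟩ <;>
  simp only [zigzag_zero, zigzag_one, zigzag_two_mul_add_two, zigzag_two_mul_add_three]
  all_goals first
    | omega
    | (have := hanti j k (by omega) (by omega); omega)
    | (have := hhigh k (by omega); omega)
    | (have := hhigh j (by omega); omega)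

lemma zigzag_injOn (hd : 0 < d) (hb : 0 < b) (hhigh : ∀ k < m, (m : ℤ) ≤ k + y k)
    (hanti : ∀ j k, j < k → k < m → (k : ℤ) + y k < j + y j) :
    Set.InjOn (zigzag d b y) (Set.Iic (2 * m + 2)) := by
  intro n₁ hn₁ n₂ hn₂ h
  by_contra hne
  rcases Nat.lt_or_gt_of_ne hne with hlt | hlt
  · exact zigzag_ne_of_lt hd hb hhigh hanti hlt hn₂ h
  · exact zigzag_ne_of_lt hd hb hhigh hanti hlt hn₁ h.symm

lemma zigzag_mem_Icc (hhigh : ∀ k < m, (m : ℤ) ≤ k + y k)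
    (hanti : ∀ j k, j < k → k < m → (k : ℤ) + y k < j + y j) {n : ℕ} (h2n : 2 < n)
    (hn : n ≤ 2 * m + 2) : zigzag d b y n ∈ Set.Icc (b + 1) (b + y 0 + 1) := by
  have hy0 := hhigh 0 (by omega)
  rcases n.zero_or_one_or_even_or_odd_add_two with rfl | rfl | ⟨k, rfl⟩ | ⟨k, rfl⟩
  · omega
  · omega
  · simp only [zigzag_two_mul_add_two, Set.mem_Icc]
    omega
  · have := hhigh k (by omega)
    rcases k.eq_zero_or_pos with rfl | hk
    · simp only [zigzag_two_mul_add_three, Set.mem_Icc]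
      omega
    · have := hanti 0 k hk (by omega)
      simp only [zigzag_two_mul_add_three, Set.mem_Icc]
      omega

lemma exists_abs_zigzag_succ_sub_eq (hd : 0 < d) (hbd : 0 < b + d) (hpos : ∀ k < m, 0 < y k)
    {x : ℤ} (hx : x = d ∨ x = b + d ∨ ∃ k < m, x = y k ∨ x = y k + 1) :
    ∃ n < 2 * m + 2, |zigzag d b y (n + 1) - zigzag d b y n| = x := by
  rcases hx with rfl | rfl | ⟨k, hk, rfl | rfl⟩
  · exact ⟨0, by omega, by simp [abs_of_pos hd]⟩
  · exact ⟨1, by omega, by simp [abs_of_pos hbd]⟩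
  · refine ⟨2 * k + 3, by omega, ?_⟩
    rw [show 2 * k + 3 + 1 = 2 * (k + 1) + 2 by ring, zigzag_two_mul_add_two,
      zigzag_two_mul_add_three, abs_of_neg (by have := hpos k hk; push_cast; omega)]
    push_cast
    ring
  · refine ⟨2 * k + 2, by omega, ?_⟩
    rw [zigzag_two_mul_add_three, zigzag_two_mul_add_two,
      abs_of_pos (by have := hpos k hk; omega)]
    ring

end zigzag

lemma card_union_image_add_one {S : Finset ℤ} (hS : Disjoint S (S.image (· + 1))) :
    #(S ∪ S.image (· + 1)) = 2 * #S := by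
  rw [card_union_of_disjoint hS, card_image_of_injective _ (add_left_injective 1)]
  ring

lemma exists_zigzag_path {d b : ℤ} (hd : 0 < d) (hb : 0 < b) {S : Finset ℤ}
    (hS : Disjoint S (S.image (· + 1))) (hpos : ∀ s ∈ S, 0 < s) :
    ∃ p : ℕ → ℤ, Set.InjOn p (Set.Iic (2 * #S + 2)) ∧ p 0 = 0 ∧ p 1 = -d ∧ p 2 = b ∧
      (∀ n, 2 < n → n ≤ 2 * #S + 2 →
        p n ∈ Set.Icc (b + 1) (b + (S ∪ S.image (· + 1)).max.unbotD 0)) ∧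
      p (2 * #S + 2) = b + #S ∧
      ∀ x ∈ insert d (insert (b + d) (S ∪ S.image (· + 1))),
        ∃ n < 2 * #S + 2, |p (n + 1) - p n| = x := by
  obtain ⟨y, hyS, hSy, hgap⟩ := S.exists_enum_of_disjoint_image_add_one hS
  have hy : ∀ k < #S, 0 < y k := fun k hk => hpos _ (hyS k hk)
  have hhigh : ∀ k < #S, (#S : ℤ) ≤ k + y k := fun k hk => le_add_of_gap hgap hy hk
  have hanti : ∀ j k, j < k → k < #S → (k : ℤ) + y k < j + y j :=
    fun j k hjk hk => add_lt_add_of_gap hgap hjk hk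
  refine ⟨zigzag d b y, zigzag_injOn hd hb hhigh hanti, rfl, rfl, zigzag_two,
    fun n h2n hn => ?_, zigzag_two_mul_add_two _, fun x hx => ?_⟩
  · have hmax : y 0 + 1 ≤ (S ∪ S.image (· + 1)).max.unbotD 0 :=
      WithBot.le_unbotD (le_max (by simp [hyS 0 (by omega)]))
    have hn' := zigzag_mem_Icc (d := d) (b := b) hhigh hanti h2n hn
    exact ⟨hn'.1, by linarith [hn'.2]⟩
  · refine exists_abs_zigzag_succ_sub_eq hd (by omega) hy ?_
    simp only [mem_insert, mem_union, mem_image] at hx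
    rcases hx with rfl | rfl | hxS | ⟨s, hs, rfl⟩
    · exact Or.inl rfl
    · exact Or.inr (Or.inl rfl)
    · obtain ⟨k, hk, rfl⟩ := hSy x hxS
      exact Or.inr (Or.inr ⟨k, hk, Or.inl rfl⟩)
    · obtain ⟨k, hk, rfl⟩ := hSy s hs
      exact Or.inr (Or.inr ⟨k, hk, Or.inr rfl⟩)

theorem stmt4_general (lam : ℕ) (d dstar : ℤ) (X D : Finset ℤ)
    (hdlt : d < dstar) (hdX : d ∉ X) (hdsX : dstar ∉ X)
    (hD : D = insert d (insert dstar X))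
    (hcard : D.card = 2 * lam) (hpos : ∀ x ∈ D, 0 < x)
    (hX : PairsOfConsecutive X) :
    ∃ p : Fin (2 * lam + 1) → ℤ,
      Function.Injective p ∧
      p 0 = 0 ∧
      p 1 = -d ∧ p 2 = dstar - d ∧
      (∀ i : Fin (2 * lam + 1), 2 < (i : ℕ) →
        p i ∈ Set.Icc (dstar - d + 1) (dstar - d + X.max.unbotD 0)) ∧
      p (Fin.last (2 * lam)) = dstar - d + lam - 1 ∧
      ((Finset.univ.val : Multiset (Fin (2 * lam))).bind fun i =>
          {p i.succ - p i.castSucc, -(p i.succ - p i.castSucc)})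
        = D.val + D.val.map (fun x => -x) := by
  obtain ⟨S, hS, rfl⟩ := hX
  obtain rfl : lam = #S + 1 := by
    have hdX' : d ∉ insert dstar (S ∪ S.image (· + 1)) := by
      rw [mem_insert, not_or]
      exact ⟨hdlt.ne, hdX⟩
    rw [hD, card_insert_of_notMem hdX', card_insert_of_notMem hdsX, card_union_image_add_one hS]
      at hcard
    omega
  obtain ⟨p, hinj, h0, h1, h2, hIcc, hlast, hsteps⟩ :=
    exists_zigzag_path (hpos d (by simp [hD])) (sub_pos.2 hdlt) hS
      (fun s hs => hpos s (by simp [hD, hs]))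
  refine ⟨fun i => p i, fun i j h => Fin.ext (hinj (by simp; omega) (by simp; omega) h), h0,
    ?_, ?_, fun i hi => hIcc i hi (by omega), ?_, ?_⟩
  · simpa [Nat.mod_eq_of_lt (show 1 < 2 * (#S + 1) + 1 by omega)] using h1
  · simpa [Nat.mod_eq_of_lt (show 2 < 2 * (#S + 1) + 1 by omega)] using h2
  · simp only [Fin.val_last, mul_add_one, hlast]
    push_cast
    ring
  · rw [Multiset.bind_pair_neg, univ_val_map_eq_of_forall_exists (D := D) (by simp [hcard])]
    intro x hx
    obtain ⟨n, hn, hnx⟩ := hsteps x (by rwa [sub_add_cancel, ← hD])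
    exact ⟨⟨n, hn⟩, hnx⟩

/-- Lemma: let `D = {d, d*} ∪ X` be a set of `2λ` positive integers with `d < d*`,
where `X` (of size `2λ−2`) can be partitioned into pairs of consecutive integers.
Then there is a path `P = 0, p₁, …, p_{2λ}` with integer vertices such that
(i) `(p₁,p₂) = (−d, d*−d)` and `pᵢ ∈ [d*−d+1, d*−d+max X]` for `i > 2`;
(ii) `p_{2λ} = d*−d+λ−1`; (iii) `ΔP = ±D` as multisets. -/
theorem stmt4 (lam : ℕ) (hlam : 0 < lam) (d dstar : ℤ) (X D : Finset ℤ)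
    (hdlt : d < dstar) (hdX : d ∉ X) (hdsX : dstar ∉ X)
    (hD : D = insert d (insert dstar X))
    (hcard : D.card = 2 * lam) (hpos : ∀ x ∈ D, 0 < x)
    (hX : PairsOfConsecutive X) :
    ∃ p : Fin (2 * lam + 1) → ℤ,
      Function.Injective p ∧
      p 0 = 0 ∧
      p 1 = -d ∧ p 2 = dstar - d ∧
      (∀ i : Fin (2 * lam + 1), 2 < (i : ℕ) →
        p i ∈ Set.Icc (dstar - d + 1) (dstar - d + X.max.unbotD 0)) ∧
      p (Fin.last (2 * lam)) = dstar - d + lam - 1 ∧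
      ((Finset.univ.val : Multiset (Fin (2 * lam))).bind fun i =>
          {p i.succ - p i.castSucc, -(p i.succ - p i.castSucc)})
        = D.val + D.val.map (fun x => -x) :=
  stmt4_general lam d dstar X D hdlt hdX hdsX hD hcard hpos hX
end

section
/- Let I and J be nonempty finite intervals of integers with |I| < μ, and set A = I + J·μ = {i + jμ : i ∈ I, j ∈ J}. Then for every integer τ there is a bijection a ↦ a* from A to A + τ such that {a* − a : a ∈ A} = ([1, 2|I|]_o + [1, 2|J|]_o·μ) + τ − |I| − |J|μ, where [a,b]_o denotes the odd integers in [a,b]. -/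
/-!
With `I = [a, b]` and `J = [c, e]`, the set `A = I + J·μ` is invariant under the reflection
`z ↦ (a + b) + (c + e)μ − z`, since each interval is invariant under `i ↦ a + b − i`. So
`a* = (a + b) + (c + e)μ + τ − a` maps `A` bijectively onto `A + τ`, and for `a = i + jμ`
the difference `a* − a = (a + b − 2i) + (c + e − 2j)μ + τ`, where `a + b − 2i` runs through
`[1, 2|I|]_o − |I|` as `i` runs through `I`, and likewise for `j`.
-/

/-- The odd integers in the interval `[1, 2s]`, i.e. `{1, 3, …, 2s−1}`. -/
noncomputable def oddsUpTo (s : ℕ) : Finset ℤ :=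
  (Finset.Icc (1 : ℤ) (2 * s)).filter (fun x => x % 2 = 1)

open Finset

lemma image_reflect_Icc (a b : ℤ) : (Icc a b).image (fun i => a + b - i) = Icc a b := by
  ext x
  simp only [mem_image, mem_Icc]
  exact ⟨by omega, fun hx => ⟨a + b - x, by omega, by omega⟩⟩

lemma oddsUpTo_card_Icc (a b : ℤ) :
    oddsUpTo (Icc a b).card = (Icc a b).image (fun i => 2 * (b - i) + 1) := by
  ext x
  simp only [oddsUpTo, Int.card_Icc, mem_filter, mem_Icc, mem_image]
  exact ⟨fun hx => ⟨b - (x - 1) / 2, by omega, by omega⟩, by omega⟩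

lemma image_reflect_image₂_add_mul_Icc (a b c e μ : ℤ) :
    (image₂ (fun i j => i + j * μ) (Icc a b) (Icc c e)).image (fun z => a + b + (c + e) * μ - z)
      = image₂ (fun i j => i + j * μ) (Icc a b) (Icc c e) := by
  conv_rhs => rw [← image_reflect_Icc a b, ← image_reflect_Icc c e]
  rw [image_image₂, image₂_image_left, image₂_image_right]
  congr 1
  ext i j
  ring

lemma bijOn_add_of_image_eq {α : Type*} [DecidableEq α] [Add α] [IsRightCancelAdd α]
    {A : Finset α} {σ : α → α} (hσ : Function.Injective σ)
    (hA : A.image σ = A) (τ : α) :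
    Set.BijOn (fun z => σ z + τ) ↑A ↑(A.image (· + τ)) := by
  have hinj : Set.InjOn (fun z => σ z + τ) ↑A := fun x _ y _ h => hσ (add_right_cancel h)
  convert hinj.bijOn_image
  rw [← coe_image, ← hA, image_image, hA]
  rfl

lemma image_sub_image₂_add_mul_Icc (a b c e μ τ : ℤ) :
    (image₂ (fun i j => i + j * μ) (Icc a b) (Icc c e)).image
        (fun z => a + b + (c + e) * μ - z + τ - z)
      = image₂ (fun x y => x + y * μ + (τ - ((Icc a b).card : ℤ) - ((Icc c e).card : ℤ) * μ))
          (oddsUpTo (Icc a b).card) (oddsUpTo (Icc c e).card) := by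
  rw [oddsUpTo_card_Icc, oddsUpTo_card_Icc, image_image₂, image₂_image_left, image₂_image_right]
  refine image₂_congr fun i hi j hj => ?_
  rw [mem_Icc] at hi hj
  rw [Int.card_Icc, Int.card_Icc, Int.toNat_of_nonneg (by omega), Int.toNat_of_nonneg (by omega)]
  ring

theorem stmt5_general (I J : Finset ℤ) (μ τ : ℤ)
    (hI : ∃ a b : ℤ, a ≤ b ∧ I = Finset.Icc a b)
    (hJ : ∃ c e : ℤ, c ≤ e ∧ J = Finset.Icc c e) :
    ∃ f : ℤ → ℤ,
      Set.BijOn f ↑(Finset.image₂ (fun i j => i + j * μ) I J)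
        ↑((Finset.image₂ (fun i j => i + j * μ) I J).image (· + τ)) ∧
      (Finset.image₂ (fun i j => i + j * μ) I J).image (fun a => f a - a)
        = Finset.image₂
            (fun x y => x + y * μ + (τ - (I.card : ℤ) - (J.card : ℤ) * μ))
            (oddsUpTo I.card) (oddsUpTo J.card) := by
  obtain ⟨a, b, -, rfl⟩ := hI
  obtain ⟨c, e, -, rfl⟩ := hJ
  exact ⟨fun z => a + b + (c + e) * μ - z + τ,
    bijOn_add_of_image_eq sub_right_injective (image_reflect_image₂_add_mul_Icc a b c e μ) τ,
    image_sub_image₂_add_mul_Icc a b c e μ τ⟩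

/-- Lemma: let `I` and `J` be nonempty intervals of integers with `|I| < μ`, and set
`A = I + J·μ`. For every integer `τ` there is a bijection `a ↦ a*` from `A` to
`A + τ` such that `{a* − a : a ∈ A} = ([1,2|I|]_o + [1,2|J|]_o·μ) + τ − |I| − |J|μ`. -/
theorem stmt5 (I J : Finset ℤ) (μ τ : ℤ)
    (hI : ∃ a b : ℤ, a ≤ b ∧ I = Finset.Icc a b)
    (hJ : ∃ c e : ℤ, c ≤ e ∧ J = Finset.Icc c e)
    (hμ : (I.card : ℤ) < μ) :
    ∃ f : ℤ → ℤ,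
      Set.BijOn f ↑(Finset.image₂ (fun i j => i + j * μ) I J)
        ↑((Finset.image₂ (fun i j => i + j * μ) I J).image (· + τ)) ∧
      (Finset.image₂ (fun i j => i + j * μ) I J).image (fun a => f a - a)
        = Finset.image₂
            (fun x y => x + y * μ + (τ - (I.card : ℤ) - (J.card : ℤ) * μ))
            (oddsUpTo I.card) (oddsUpTo J.card) :=
  stmt5_general I J μ τ hI hJ
end

section
/- For any nonempty finite interval I of integers of size s_I, nonempty finite interval J of size s_J, integer μ with s_I < μ, integer τ, and A = I + J·μ, the map a ↦ (max A + min A + τ − a) is a bijection from A to A + τ, and the induced map a ↦ a* − a is injective on A. -/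
/-- For nonempty integer intervals `I` (of size `s_I`) and `J`, an integer `μ` with
`|I| < μ`, any integer `τ`, and `A = I + J·μ`, the map
`a ↦ max A + min A + τ − a` is a bijection from `A` onto `A + τ`, and the induced
map `a ↦ a* − a` is injective on `A`. -/
theorem stmt6 (I J : Finset ℤ) (μ τ : ℤ)
    (hI : ∃ a b : ℤ, a ≤ b ∧ I = Finset.Icc a b)
    (hJ : ∃ c e : ℤ, c ≤ e ∧ J = Finset.Icc c e)
    (hμ : (I.card : ℤ) < μ)
    (hA : (Finset.image₂ (fun i j => i + j * μ) I J).Nonempty) :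
    Set.BijOn
      (fun a => (Finset.image₂ (fun i j => i + j * μ) I J).max' hA
        + (Finset.image₂ (fun i j => i + j * μ) I J).min' hA + τ - a)
      ↑(Finset.image₂ (fun i j => i + j * μ) I J)
      ↑((Finset.image₂ (fun i j => i + j * μ) I J).image (· + τ)) ∧
    Set.InjOn
      (fun a => ((Finset.image₂ (fun i j => i + j * μ) I J).max' hA
        + (Finset.image₂ (fun i j => i + j * μ) I J).min' hA + τ - a) - a)
      ↑(Finset.image₂ (fun i j => i + j * μ) I J) := by
  obtain ⟨a, b, hab, rfl⟩ := hI
  obtain ⟨c, e, hce, rfl⟩ := hJ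
  set A := Finset.image₂ (fun i j => i + j * μ) (Finset.Icc a b) (Finset.Icc c e) with hAdef
  have hμpos : 0 < μ := by
    have : (1 : ℤ) ≤ (Finset.Icc a b).card := by
      rw [Int.card_Icc]; omega
    omega
  have hmem : ∀ i j, i ∈ Finset.Icc a b → j ∈ Finset.Icc c e → i + j * μ ∈ A := by
    intro i j hi hj
    exact Finset.mem_image₂_of_mem hi hj
  have hmax : A.max' hA = b + e * μ := by
    apply le_antisymm
    · apply Finset.max'_le
      intro x hx
      obtain ⟨i, hi, j, hj, rfl⟩ := Finset.mem_image₂.mp hx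
      simp only [Finset.mem_Icc] at hi hj
      nlinarith [hi.2, hj.2]
    · exact Finset.le_max' _ _ (hmem b e (by simp [hab]) (by simp [hce]))
  have hmin : A.min' hA = a + c * μ := by
    apply le_antisymm
    · exact Finset.min'_le _ _ (hmem a c (by simp [hab]) (by simp [hce]))
    · apply Finset.le_min'
      intro x hx
      obtain ⟨i, hi, j, hj, rfl⟩ := Finset.mem_image₂.mp hx
      simp only [Finset.mem_Icc] at hi hj
      nlinarith [hi.1, hj.1]
  have hrefl : ∀ x ∈ A, A.max' hA + A.min' hA - x ∈ A := by
    intro x hx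
    obtain ⟨i, hi, j, hj, rfl⟩ := Finset.mem_image₂.mp hx
    simp only [Finset.mem_Icc] at hi hj
    have : A.max' hA + A.min' hA - (i + j * μ) = (a + b - i) + (c + e - j) * μ := by
      rw [hmax, hmin]; ring
    rw [this]
    exact hmem _ _ (by simp only [Finset.mem_Icc]; omega) (by simp only [Finset.mem_Icc]; omega)
  constructor
  · refine ⟨?_, ?_, ?_⟩
    · intro x hx
      simp only [Finset.coe_image, Set.mem_image, Finset.mem_coe] at *
      exact ⟨A.max' hA + A.min' hA - x, hrefl x hx, by ring⟩
    · intro x _ y _ h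
      simp only at h; omega
    · intro y hy
      simp only [Finset.coe_image, Set.mem_image, Finset.mem_coe] at hy
      obtain ⟨z, hz, rfl⟩ := hy
      refine ⟨A.max' hA + A.min' hA - z, hrefl z hz, by simp; ring⟩
  · intro x _ y _ h
    simp only at h; omega
end

section
/- Let X be a finite set of positive integers of size 2λ with alternating difference pattern (s₁, …, s_λ), all elements at most 2tm−1, and let ι be the involution x ↦ 4tm − x. Then X ∪ ι(X) has size 4λ and alternating difference pattern (s₁, …, s_λ, s_λ, …, s₁); in particular X ∪ ι(X) is balanced. -/
/-!
Every element of `X` lies below the centre `2tm` of the reflection `x ↦ 4tm − x`, so `X` and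
its mirror image are disjoint and the sorted list of `X ∪ ι(X)` is the sorted list of `X`
followed by its mirror image read backwards. Reading the second half backwards reverses the
order of the pairs, and the reflection preserves each difference, so the pattern of the second
half is that of `X` reversed; the split `τ = λ` then balances it.
-/

open Finset

theorem List.getD_append_map_sub_reverse (L : List ℤ) (c : ℤ) {n : ℕ}
    (h₁ : L.length ≤ n) (h₂ : n < 2 * L.length) :
    (L ++ (L.map (c - ·)).reverse).getD n 0 = c - L.getD (2 * L.length - 1 - n) 0 := by
  have hlen : (L.map (c - ·)).length = L.length := List.length_map _
  rw [List.getD_append_right _ _ _ _ h₁, List.getD_reverse _ (by omega), hlen,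
    List.getD_eq_getElem _ _ (by omega), List.getElem_map, List.getD_eq_getElem _ _ (by omega)]
  congr 2
  omega

section Reflection

variable {X : Finset ℤ} {c : ℤ}

theorem sort_union_image_sub (hX : ∀ x ∈ X, 2 * x < c) :
    (X ∪ X.image (c - ·)).sort (· ≤ ·) =
      X.sort (· ≤ ·) ++ ((X.sort (· ≤ ·)).map (c - ·)).reverse := by
  set L := X.sort (· ≤ ·)
  have hlt : ∀ a ∈ L, ∀ b ∈ L, a < c - b := fun a ha b hb => by
    have := hX a ((mem_sort _).1 ha)
    have := hX b ((mem_sort _).1 hb)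
    omega
  have hnodup : (L ++ (L.map (c - ·)).reverse).Nodup := by
    refine (sort_nodup _ _).append
      (List.nodup_reverse.2 ((sort_nodup _ _).map sub_right_injective)) ?_
    intro a ha hb
    obtain ⟨b, hbL, rfl⟩ := List.mem_map.1 (List.mem_reverse.1 hb)
    exact (hlt _ ha _ hbL).ne rfl
  have hsorted : (L ++ (L.map (c - ·)).reverse).Pairwise (· ≤ ·) := by
    refine List.pairwise_append.2 ⟨pairwise_sort _ _, ?_, ?_⟩
    · rw [List.pairwise_reverse, List.pairwise_map]
      exact (pairwise_sort _ _).imp fun h => by omega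
    · intro a ha b hb
      obtain ⟨b, hbL, rfl⟩ := List.mem_map.1 (List.mem_reverse.1 hb)
      exact (hlt _ ha _ hbL).le
  conv_rhs => rw [← (List.toFinset_sort _ hnodup).2 hsorted]
  congr 1
  ext a
  simp [L]

theorem card_union_image_sub (hX : ∀ x ∈ X, 2 * x < c) :
    (X ∪ X.image (c - ·)).card = 2 * X.card := by
  have hdisj : Disjoint X (X.image (c - ·)) := by
    rw [disjoint_left]
    rintro a ha hb
    obtain ⟨b, hbX, rfl⟩ := mem_image.1 hb
    have := hX _ ha
    have := hX _ hbX
    omega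
  rw [card_union_of_disjoint hdisj, card_image_of_injective _ sub_right_injective, two_mul]

theorem adp_union_image_sub_of_lt (hX : ∀ x ∈ X, 2 * x < c) {i : ℕ} (hi : 2 * i + 1 < X.card) :
    adp (X ∪ X.image (c - ·)) i = adp X i := by
  have hlen := length_sort (s := X) (· ≤ ·)
  simp only [adp, sort_union_image_sub hX]
  rw [List.getD_append _ _ _ _ (by omega), List.getD_append _ _ _ _ (by omega)]

theorem adp_union_image_sub_add (hX : ∀ x ∈ X, 2 * x < c) {k i : ℕ} (hcard : X.card = 2 * k)
    (hi : i < k) : adp (X ∪ X.image (c - ·)) (k + i) = adp X (k - 1 - i) := by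
  have hlen := length_sort (s := X) (· ≤ ·)
  simp only [adp, sort_union_image_sub hX]
  rw [List.getD_append_map_sub_reverse _ _ (by omega) (by omega),
    List.getD_append_map_sub_reverse _ _ (by omega) (by omega), hlen, hcard,
    show 2 * (2 * k) - 1 - (2 * (k + i) + 1) = 2 * (k - 1 - i) by omega,
    show 2 * (2 * k) - 1 - 2 * (k + i) = 2 * (k - 1 - i) + 1 by omega]
  ring

end Reflection

theorem isBalancedSet_of_adp_add_eq {D : Finset ℤ} {k : ℕ} (hk : 0 < k)
    (h : ∀ i < k, adp D (k + i) = adp D (k - 1 - i)) : IsBalancedSet (2 * k) D := by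
  refine ⟨k, hk, by omega, ?_⟩
  rw [two_mul, sum_Ico_eq_sum_range, add_tsub_cancel_left, ← sum_range_reflect]
  exact sum_congr rfl fun i hi => (h i (mem_range.1 hi)).symm

theorem stmt8_general (t m : ℤ) (lam : ℕ) (hlam : 0 < lam)
    (X : Finset ℤ) (hcard : X.card = 2 * lam)
    (hsub : X ⊆ Finset.Icc 1 (2 * t * m - 1))
    (s : ℕ → ℤ) (hs : ∀ i < lam, adp X i = s i) :
    (X ∪ X.image (fun x => 4 * t * m - x)).card = 4 * lam ∧
    (∀ i < lam, adp (X ∪ X.image (fun x => 4 * t * m - x)) i = s i) ∧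
    (∀ i < lam, adp (X ∪ X.image (fun x => 4 * t * m - x)) (lam + i) = s (lam - 1 - i)) ∧
    IsBalancedSet (2 * lam) (X ∪ X.image (fun x => 4 * t * m - x)) := by
  have hX : ∀ x ∈ X, 2 * x < 4 * t * m := fun x hx => by
    have := (mem_Icc.1 (hsub hx)).2
    linarith
  have hfirst : ∀ i < lam, adp (X ∪ X.image (fun x => 4 * t * m - x)) i = adp X i :=
    fun i hi => adp_union_image_sub_of_lt hX (by omega)
  have hmirror : ∀ i < lam, adp (X ∪ X.image (fun x => 4 * t * m - x)) (lam + i) =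
      adp X (lam - 1 - i) := fun i hi => adp_union_image_sub_add hX hcard hi
  refine ⟨by rw [card_union_image_sub hX, hcard]; ring, fun i hi => ?_, fun i hi => ?_,
    isBalancedSet_of_adp_add_eq hlam fun i hi => ?_⟩
  · rw [hfirst i hi, hs i hi]
  · rw [hmirror i hi, hs _ (by omega)]
  · rw [hmirror i hi, hfirst _ (by omega)]

/-- If `X ⊆ [1, 2tm−1]` has size `2λ` and alternating difference pattern
`(s₁, …, s_λ)`, and `ι(x) = 4tm − x`, then `X ∪ ι(X)` has size `4λ` and
alternating difference pattern `(s₁, …, s_λ, s_λ, …, s₁)`; in particular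
`X ∪ ι(X)` is balanced. -/
theorem stmt8 (t m : ℤ) (ht : 0 < t) (hm : 0 < m) (lam : ℕ) (hlam : 0 < lam)
    (X : Finset ℤ) (hcard : X.card = 2 * lam)
    (hsub : X ⊆ Finset.Icc 1 (2 * t * m - 1))
    (s : ℕ → ℤ) (hs : ∀ i < lam, adp X i = s i) :
    (X ∪ X.image (fun x => 4 * t * m - x)).card = 4 * lam ∧
    (∀ i < lam, adp (X ∪ X.image (fun x => 4 * t * m - x)) i = s i) ∧
    (∀ i < lam, adp (X ∪ X.image (fun x => 4 * t * m - x)) (lam + i) = s (lam - 1 - i)) ∧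
    IsBalancedSet (2 * lam) (X ∪ X.image (fun x => 4 * t * m - x)) :=
  stmt8_general t m lam hlam X hcard hsub s hs
end
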